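/- arXiv:1703.00663 — 7 statements merged into one kernel-verified Lean document; each statement's English description precedes it below -/
import Mathlib

section
/- For a = 2, the 6×6 matrix M_a has nonnegative rank exactly 3, i.e., rank₊(M₂) = 3. -/
/-- The nonnegative rank of a matrix: the smallest `r` such that `M = U * V`
with `U : p × r` and `V : r × n` entrywise nonnegative. -/
noncomputable def nnRank {p n : ℕ} (M : Matrix (Fin p) (Fin n) ℝ) : ℕ :=
  sInf {r : ℕ | ∃ (U : Matrix (Fin p) (Fin r) ℝ) (V : Matrix (Fin r) (Fin n) ℝ),
    (∀ i k, 0 ≤ U i k) ∧ (∀ k j, 0 ≤ V k j) ∧ M = U * V}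

/-- The nested-hexagon matrix `M_a` for a parameter `a`. -/
noncomputable def hexM (a : ℝ) : Matrix (Fin 6) (Fin 6) ℝ :=
  (1 / a) • !![1,     a,     2*a-1, 2*a-1, a,     1;
               1,     1,     a,     2*a-1, 2*a-1, a;
               a,     1,     1,     a,     2*a-1, 2*a-1;
               2*a-1, a,     1,     1,     a,     2*a-1;
               2*a-1, 2*a-1, a,     1,     1,     a;
               a,     2*a-1, 2*a-1, a,     1,     1]

/-!
`hexM a` is the slack matrix of two nested hexagons, and for `a = 2` a triangle fits between
them; its slack factors give a nonnegative factorization of inner dimension 3. Conversely, the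
nonnegative rank dominates the ordinary rank, and the leading `3 × 3` block of `hexM 2` has
determinant `1/4`.
-/

section NonnegRank

variable {p n : ℕ} {M : Matrix (Fin p) (Fin n) ℝ}

theorem nnRank_le_of_eq_mul {r : ℕ} (U : Matrix (Fin p) (Fin r) ℝ) (V : Matrix (Fin r) (Fin n) ℝ)
    (hU : ∀ i k, 0 ≤ U i k) (hV : ∀ k j, 0 ≤ V k j) (h : M = U * V) : nnRank M ≤ r :=
  Nat.sInf_le ⟨U, V, hU, hV, h⟩

theorem rank_le_nnRank (hM : ∀ i j, 0 ≤ M i j) : M.rank ≤ nnRank M := by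
  have hne : {r : ℕ | ∃ (U : Matrix (Fin p) (Fin r) ℝ) (V : Matrix (Fin r) (Fin n) ℝ),
      (∀ i k, 0 ≤ U i k) ∧ (∀ k j, 0 ≤ V k j) ∧ M = U * V}.Nonempty :=
    ⟨n, M, 1, hM, fun k j => by by_cases h : k = j <;> simp [Matrix.one_apply, h],
      (Matrix.mul_one M).symm⟩
  obtain ⟨U, V, -, -, hUV⟩ := Nat.sInf_mem hne
  calc M.rank = (U * V).rank := congrArg Matrix.rank hUV
    _ ≤ U.rank := Matrix.rank_mul_le_left U V
    _ ≤ nnRank M := Matrix.rank_le_width U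

end NonnegRank

theorem hexM_nonneg {a : ℝ} (ha : 1 / 2 ≤ a) (i j : Fin 6) : 0 ≤ hexM a i j := by
  have ha₀ : 0 < a := by linarith
  have ha₁ : 0 ≤ 2 * a - 1 := by linarith
  fin_cases i <;> fin_cases j <;>
    simp [hexM] <;> positivity

theorem hexM_two_eq_mul :
    hexM 2 = !![(0 : ℝ), 2, 1; 0, 1, 2; 1, 0, 2; 2, 0, 1; 2, 1, 0; 1, 2, 0] *
      !![(2 : ℝ) / 3, 1 / 2, 1 / 6, 0, 1 / 6, 1 / 2;
        1 / 6, 1 / 2, 2 / 3, 1 / 2, 1 / 6, 0;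
        1 / 6, 0, 1 / 6, 1 / 2, 2 / 3, 1 / 2] := by
  ext i j
  fin_cases i <;> fin_cases j <;>
    simp [hexM, Matrix.mul_apply, Fin.sum_univ_three] <;> norm_num

theorem det_hexM_two_submatrix :
    ((hexM 2).submatrix ![0, 1, 2] ![0, 1, 2]).det = 1 / 4 := by
  rw [Matrix.det_fin_three]
  simp [hexM]
  norm_num

theorem three_le_rank_hexM_two : 3 ≤ (hexM 2).rank := by
  have hunit : IsUnit ((hexM 2).submatrix ![0, 1, 2] ![0, 1, 2]) := by
    rw [Matrix.isUnit_iff_isUnit_det, det_hexM_two_submatrix]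
    norm_num
  calc 3 = ((hexM 2).submatrix ![0, 1, 2] ![0, 1, 2]).rank := by
        rw [Matrix.rank_of_isUnit _ hunit, Fintype.card_fin]
    _ ≤ (hexM 2).rank := Matrix.rank_submatrix_le _ _ _

/-- For `a = 2`, the hexagon matrix has nonnegative rank exactly 3. -/
theorem nnRank_hexM_two : nnRank (hexM 2) = 3 := by
  refine le_antisymm (nnRank_le_of_eq_mul _ _ ?_ ?_ hexM_two_eq_mul) ?_
  · intro i k
    fin_cases i <;> fin_cases k <;> simp
  · intro k j
    fin_cases k <;> fin_cases j <;> norm_num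
  · exact three_le_rank_hexM_two.trans (rank_le_nnRank (hexM_nonneg (by norm_num)))
end

section
/- For every real number a > 1, the 6×6 matrix M_a has nonnegative rank at most 5, i.e., there exist entrywise nonnegative matrices U ∈ ℝ^{6×5} and V ∈ ℝ^{5×6} with M_a = U·V; this bound holds uniformly in a, even as a → ∞. -/
open Matrix

theorem Matrix.exists_nonneg_vecMulVec_vecMul_add_smul_mul_eq_mul {R m n r : Type*} [Semiring R]
    [PartialOrder R] [IsOrderedRing R] [Fintype r] {u : m → R} {x : r → R} {t : R}
    {W : Matrix m r R} (V : Matrix r n R) (hu : ∀ i, 0 ≤ u i) (hx : ∀ k, 0 ≤ x k) (ht : 0 ≤ t)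
    (hW : ∀ i k, 0 ≤ W i k) :
    ∃ U : Matrix m r R, (∀ i k, 0 ≤ U i k) ∧
      vecMulVec u (x ᵥ* V) + t • (W * V) = U * V := by
  refine ⟨vecMulVec u x + t • W, fun i k => ?_, ?_⟩
  · simp only [add_apply, vecMulVec_apply, smul_apply, smul_eq_mul]
    exact add_nonneg (mul_nonneg (hu i) (hx k)) (mul_nonneg ht (hW i k))
  · rw [Matrix.add_mul, vecMulVec_mul, smul_mul]

def hexSlack : Matrix (Fin 6) (Fin 6) ℝ :=
  !![0, 1, 2, 2, 1, 0;
     0, 0, 1, 2, 2, 1;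
     1, 0, 0, 1, 2, 2;
     2, 1, 0, 0, 1, 2;
     2, 2, 1, 0, 0, 1;
     1, 2, 2, 1, 0, 0]

def hexSlackLeft : Matrix (Fin 6) (Fin 5) ℝ :=
  !![2, 0, 0, 0, 1;
     1, 0, 0, 1, 0;
     0, 1, 0, 1, 0;
     0, 2, 0, 0, 1;
     0, 1, 1, 0, 0;
     1, 0, 1, 0, 0]

def hexSlackRight : Matrix (Fin 5) (Fin 6) ℝ :=
  !![0, 0, 1, 1, 0, 0;
     1, 0, 0, 0, 0, 1;
     1, 2, 1, 0, 0, 0;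
     0, 0, 0, 1, 2, 1;
     0, 1, 0, 0, 1, 0]

theorem hexSlackLeft_nonneg (i : Fin 6) (k : Fin 5) : 0 ≤ hexSlackLeft i k := by
  fin_cases i <;> fin_cases k <;> norm_num [hexSlackLeft]

theorem hexSlackRight_nonneg (k : Fin 5) (j : Fin 6) : 0 ≤ hexSlackRight k j := by
  fin_cases k <;> fin_cases j <;> norm_num [hexSlackRight]

theorem hexSlack_eq_mul : hexSlack = hexSlackLeft * hexSlackRight := by
  ext i j
  fin_cases i <;> fin_cases j <;>
    simp [hexSlack, hexSlackLeft, hexSlackRight, mul_apply, Fin.sum_univ_succ, one_add_one_eq_two]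

theorem vecMul_hexSlackRight : ![1, 1, 0, 0, 1] ᵥ* hexSlackRight = 1 := by
  ext j
  fin_cases j <;> simp [hexSlackRight, vecMul, dotProduct, Fin.sum_univ_succ]

theorem hexM_eq_smul_add_smul {a : ℝ} (ha : a ≠ 0) :
    hexM a = vecMulVec (fun _ => a⁻¹) 1 + (1 - a⁻¹) • hexSlack := by
  ext i j
  fin_cases i <;> fin_cases j <;> simp [hexM, hexSlack] <;> field_simp <;> ring

/-- For every `a > 1`, the hexagon matrix has nonnegative rank at most 5:
there is an entrywise nonnegative factorization of inner dimension 5. -/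
theorem nnRank_hexM_le_five {a : ℝ} (ha : 1 < a) :
    ∃ (U : Matrix (Fin 6) (Fin 5) ℝ) (V : Matrix (Fin 5) (Fin 6) ℝ),
      (∀ i k, 0 ≤ U i k) ∧ (∀ k j, 0 ≤ V k j) ∧ hexM a = U * V := by
  have ha₀ : 0 < a := zero_lt_one.trans ha
  obtain ⟨U, hU, hUV⟩ := exists_nonneg_vecMulVec_vecMul_add_smul_mul_eq_mul hexSlackRight
    (u := fun _ => a⁻¹) (x := ![1, 1, 0, 0, 1]) (fun _ => inv_nonneg.2 ha₀.le)
    (by simp [Fin.forall_fin_succ]) (sub_nonneg.2 (inv_le_one_of_one_le₀ ha.le))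
    hexSlackLeft_nonneg
  refine ⟨U, hexSlackRight, hU, hexSlackRight_nonneg, ?_⟩
  rw [hexM_eq_smul_add_smul ha₀.ne', hexSlack_eq_mul, ← vecMul_hexSlackRight, hUV]
end

section
/- Let M = [[0,1,2,2,1,0],[0,0,1,2,2,1],[1,0,0,1,2,2],[2,1,0,0,1,2],[2,2,1,0,0,1],[1,2,2,1,0,0]], U = [[1,0,0,1,0],[2,0,0,0,1],[1,0,1,0,0],[0,1,1,0,0],[0,2,0,0,1],[0,1,0,1,0]], and V = [[0,0,0,1,1,0],[1,1,0,0,0,0],[1,0,0,0,1,2],[0,1,2,1,0,0],[0,0,1,0,0,1]]. Then U and V are entrywise nonnegative, M = U·V (so rank₊(M) ≤ 5), and the linear-algebraic rank of U equals 4. -/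
/-!
Nonnegativity and `M = U * V` are finite computations. For the rank, `U` factors as `B * C`
through four coordinates, with `L * B = 1` and `C * Q = 1`: the factorization bounds the rank
by 4, and `L * U * Q = 1` bounds it below by 4.
-/

namespace Matrix

variable {R m n k : Type*} [CommSemiring R] [StrongRankCondition R]
  [Fintype m] [Fintype n] [Fintype k] [DecidableEq k]

theorem rank_mul_eq_card_of_mul_eq_one {B : Matrix m k R} {C : Matrix k n R}
    {L : Matrix k m R} {Q : Matrix n k R} (hB : L * B = 1) (hC : C * Q = 1) :
    (B * C).rank = Fintype.card k := by
  refine le_antisymm ((rank_mul_le_left B C).trans (rank_le_card_width B)) ?_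
  calc Fintype.card k = (L * (B * C) * Q).rank := by
        rw [← Matrix.mul_assoc L B C, hB, Matrix.one_mul, hC, rank_one]
    _ ≤ (L * (B * C)).rank := rank_mul_le_left _ _
    _ ≤ (B * C).rank := rank_mul_le_right _ _

end Matrix

/-- The limit hexagon matrix `M = lim_{a→∞} M_a` admits the explicit exact
nonnegative factorization `M = U * V` with inner dimension 5, where
`rank U = 4`. -/
theorem limit_hexagon_factorization :
    let M : Matrix (Fin 6) (Fin 6) ℝ :=
      !![0, 1, 2, 2, 1, 0;
         0, 0, 1, 2, 2, 1;
         1, 0, 0, 1, 2, 2;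
         2, 1, 0, 0, 1, 2;
         2, 2, 1, 0, 0, 1;
         1, 2, 2, 1, 0, 0]
    let U : Matrix (Fin 6) (Fin 5) ℝ :=
      !![1, 0, 0, 1, 0;
         2, 0, 0, 0, 1;
         1, 0, 1, 0, 0;
         0, 1, 1, 0, 0;
         0, 2, 0, 0, 1;
         0, 1, 0, 1, 0]
    let V : Matrix (Fin 5) (Fin 6) ℝ :=
      !![0, 0, 0, 1, 1, 0;
         1, 1, 0, 0, 0, 0;
         1, 0, 0, 0, 1, 2;
         0, 1, 2, 1, 0, 0;
         0, 0, 1, 0, 0, 1]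
    (∀ i k, 0 ≤ U i k) ∧ (∀ k j, 0 ≤ V k j) ∧ M = U * V ∧ U.rank = 4 := by
  intro M U V
  refine ⟨by simp [U, Fin.forall_fin_succ], by simp [V, Fin.forall_fin_succ],
    by norm_num [M, U, V, Matrix.cons_mul, Matrix.vecMul_cons], ?_⟩
  let B : Matrix (Fin 6) (Fin 4) ℝ :=
    !![1, 0, 1, 0; 2, 0, 0, 1; 1, 1, 0, 0; 0, 1, 0, 0; 0, 0, 0, 1; 0, 0, 1, 0]
  let C : Matrix (Fin 4) (Fin 5) ℝ :=
    !![1, -1, 0, 0, 0; 0, 1, 1, 0, 0; 0, 1, 0, 1, 0; 0, 2, 0, 0, 1]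
  let L : Matrix (Fin 4) (Fin 6) ℝ :=
    !![0, 0, 1, -1, 0, 0; 0, 0, 0, 1, 0, 0; 0, 0, 0, 0, 0, 1; 0, 0, 0, 0, 1, 0]
  let Q : Matrix (Fin 5) (Fin 4) ℝ :=
    !![1, 0, 0, 0; 0, 0, 0, 0; 0, 1, 0, 0; 0, 0, 1, 0; 0, 0, 0, 1]
  have hU : U = B * C := by norm_num [U, B, C, Matrix.cons_mul, Matrix.vecMul_cons]
  have hL : L * B = 1 := by
    ext i j
    fin_cases i <;> fin_cases j <;> simp [L, B, Matrix.mul_apply, Fin.sum_univ_succ]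
  have hQ : C * Q = 1 := by
    ext i j
    fin_cases i <;> fin_cases j <;> simp [C, Q, Matrix.mul_apply, Fin.sum_univ_succ]
  rw [hU, Matrix.rank_mul_eq_card_of_mul_eq_one hL hQ, Fintype.card_fin]
end

section
/- Let A ∈ ℝ^{p×k}, b ∈ ℝ^p, and let P = {x ∈ ℝ^k : b − Ax ≥ 0 entrywise} be a polytope equal to the convex hull of finitely many points w₁, …, w_n ∈ ℝ^k (each wⱼ ∈ P). Define the slack matrix S ∈ ℝ^{p×n} by S(i,j) = bᵢ − (A wⱼ)ᵢ, and suppose S = U·V for entrywise nonnegative matrices U ∈ ℝ^{p×r}, V ∈ ℝ^{r×n}. Then the projection of Q = {(x,y) ∈ ℝ^k × ℝ^r : b − Ax = Uy and y ≥ 0} onto the x-coordinates equals P, i.e., {x ∈ ℝ^k : ∃ y ∈ ℝ^r, y ≥ 0 and b − Ax = Uy} = P. -/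
/-!
If `x ∈ P`, write `x = ∑ⱼ cⱼ wⱼ` as a convex combination of the vertices. Slack is affine in `x`
and the weights sum to one, so `b - Ax = ∑ⱼ cⱼ (b - A wⱼ) = S c = U (V c)`, and `y = V c ≥ 0`.
Conversely `b - Ax = U y ≥ 0` whenever `U, y ≥ 0`.
-/

open Set Matrix

lemma Matrix.mulVec_nonneg {R m n : Type*} [Semiring R] [PartialOrder R] [IsOrderedRing R]
    [Fintype n] {M : Matrix m n R} (hM : ∀ i j, 0 ≤ M i j) {v : n → R} (hv : ∀ j, 0 ≤ v j) :
    0 ≤ M *ᵥ v :=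
  fun i => dotProduct_nonneg_of_nonneg (hM i) hv

lemma convexHull_range_eq_image_stdSimplex {𝕜 E ι : Type*} [Field 𝕜] [LinearOrder 𝕜]
    [IsStrictOrderedRing 𝕜] [AddCommGroup E] [Module 𝕜 E] [Fintype ι] (w : ι → E) :
    convexHull 𝕜 (range w) = (fun c => ∑ j, c j • w j) '' stdSimplex 𝕜 ι := by
  classical
  change _ = Fintype.linearCombination 𝕜 w '' _
  rw [← convexHull_rangle_single_eq_stdSimplex, LinearMap.image_convexHull, ← range_comp]
  congr 2
  ext i
  simp

lemma sub_mulVec_sum_smul {R m κ ι : Type*} [CommRing R] [Fintype κ] [Fintype ι]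
    (A : Matrix m κ R) (b : m → R) (w : ι → κ → R) {c : ι → R} (hc : ∑ j, c j = 1) :
    b - A *ᵥ ∑ j, c j • w j = ∑ j, c j • (b - A *ᵥ w j) := by
  simp only [mulVec_sum, mulVec_smul, smul_sub, Finset.sum_sub_distrib, ← Finset.sum_smul, hc,
    one_smul]

lemma exists_nonneg_slack_eq_mulVec_of_mem_convexHull {𝕜 m κ ι ρ : Type*} [Field 𝕜]
    [LinearOrder 𝕜] [IsStrictOrderedRing 𝕜] [Fintype κ] [Fintype ι] [Fintype ρ]
    {A : Matrix m κ 𝕜} {b : m → 𝕜} {w : ι → κ → 𝕜} {U : Matrix m ρ 𝕜} {V : Matrix ρ ι 𝕜}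
    (hV : ∀ l j, 0 ≤ V l j) (hS : ∀ i j, b i - (A *ᵥ w j) i = (U * V) i j)
    {x : κ → 𝕜} (hx : x ∈ convexHull 𝕜 (range w)) :
    ∃ y : ρ → 𝕜, (∀ l, 0 ≤ y l) ∧ b - A *ᵥ x = U *ᵥ y := by
  rw [convexHull_range_eq_image_stdSimplex] at hx
  obtain ⟨c, ⟨hc₀, hc₁⟩, rfl⟩ := hx
  refine ⟨V *ᵥ c, mulVec_nonneg hV hc₀, ?_⟩
  calc b - A *ᵥ ∑ j, c j • w j
      = ∑ j, c j • (b - A *ᵥ w j) := sub_mulVec_sum_smul A b w hc₁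
    _ = (U * V) *ᵥ c := by
        ext i
        simp [mulVec, dotProduct, Finset.sum_apply, ← hS, mul_comm]
    _ = U *ᵥ (V *ᵥ c) := (mulVec_mulVec c U V).symm

/-- Yannakakis, direction `xp(P) ≤ rank₊(S_P)`: any exact nonnegative
factorization `S = U * V` of the slack matrix of a polytope
`P = {x | b - Ax ≥ 0} = conv{w₁,…,w_n}` yields an extended formulation of `P`:
the projection of `Q = {(x,y) | b - Ax = Uy, y ≥ 0}` onto `x` equals `P`. -/
theorem extended_formulation_of_slack_NMF {p k n r : ℕ}
    (A : Matrix (Fin p) (Fin k) ℝ) (b : Fin p → ℝ)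
    (w : Fin n → Fin k → ℝ)
    (hP : {x : Fin k → ℝ | ∀ i, 0 ≤ b i - A.mulVec x i}
            = convexHull ℝ (Set.range w))
    (U : Matrix (Fin p) (Fin r) ℝ) (V : Matrix (Fin r) (Fin n) ℝ)
    (hU : ∀ i l, 0 ≤ U i l) (hV : ∀ l j, 0 ≤ V l j)
    (hS : ∀ i j, b i - A.mulVec (w j) i = (U * V) i j) :
    {x : Fin k → ℝ | ∃ y : Fin r → ℝ, (∀ l, 0 ≤ y l) ∧
        (∀ i, b i - A.mulVec x i = U.mulVec y i)}
      = {x : Fin k → ℝ | ∀ i, 0 ≤ b i - A.mulVec x i} := by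
  refine Subset.antisymm ?_ fun x hx => ?_
  · rintro x ⟨y, hy, hxy⟩ i
    rw [hxy i]
    exact mulVec_nonneg hU hy i
  · obtain ⟨y, hy, hxy⟩ :=
      exists_nonneg_slack_eq_mulVec_of_mem_convexHull hV hS (hP ▸ hx : x ∈ convexHull ℝ _)
    exact ⟨y, hy, fun i => congrFun hxy i⟩
end

section
/- Let M ∈ ℝ^{p×n} be entrywise nonnegative, and let u ∈ ℝ^p, v ∈ ℝ^n be arbitrary vectors. Then ‖M − |u|·|v|ᵀ‖_F ≤ ‖M − u·vᵀ‖_F, where |u| and |v| denote the entrywise absolute values of u and v. In particular, replacing a rank-one factor by its entrywise absolute value never increases the Frobenius approximation error of a nonnegative matrix. -/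
theorem sq_sub_abs_le_sq_sub {α : Type*} [Ring α] [LinearOrder α] [IsStrictOrderedRing α]
    {a : α} (ha : 0 ≤ a) (b : α) : (a - |b|) ^ 2 ≤ (a - b) ^ 2 := by
  have h := abs_abs_sub_abs_le_abs_sub a b
  rw [abs_of_nonneg ha] at h
  exact sq_le_sq.mpr h

/-- For a nonnegative matrix `M`, replacing a rank-one factor `u vᵀ` by the
entrywise absolute values `|u| |v|ᵀ` never increases the Frobenius error. -/
theorem abs_rankOne_approx_le {p n : ℕ}
    (M : Matrix (Fin p) (Fin n) ℝ) (hM : ∀ i j, 0 ≤ M i j)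
    (u : Fin p → ℝ) (v : Fin n → ℝ) :
    Real.sqrt (∑ i, ∑ j, (M i j - |u i| * |v j|) ^ 2)
      ≤ Real.sqrt (∑ i, ∑ j, (M i j - u i * v j) ^ 2) := by
  refine Real.sqrt_le_sqrt (Finset.sum_le_sum fun i _ => Finset.sum_le_sum fun j _ => ?_)
  rw [← abs_mul]
  exact sq_sub_abs_le_sq_sub (hM i j) _
end

section
/- Let M ∈ ℝ^{p×n} be entrywise nonnegative. Then the infimum of ‖M − u·vᵀ‖_F over all pairs u ∈ ℝ^p, v ∈ ℝ^n equals the infimum of ‖M − u·vᵀ‖_F over all entrywise nonnegative pairs u ≥ 0, v ≥ 0. That is, the rank-one NMF problem has the same optimal value as the unconstrained rank-one approximation problem. -/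
/-! Replacing a rank-one factorization `(u, v)` by `(|u|, |v|)` never increases the error
against a nonnegative `M`: entrywise, `|uᵢ vⱼ|` is at least as close to `Mᵢⱼ ≥ 0` as `uᵢ vⱼ`.
So every unconstrained error value is dominated by a nonnegative one, and the infima agree. -/

lemma sq_sub_abs_le_sq_sub_s13 {m : ℝ} (hm : 0 ≤ m) (x : ℝ) : (m - |x|) ^ 2 ≤ (m - x) ^ 2 := by
  nlinarith [sq_abs x, le_abs_self x]

lemma sqrt_sum_sq_sub_abs_mul_abs_le {ι κ : Type*} [Fintype ι] [Fintype κ]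
    (M : Matrix ι κ ℝ) (hM : ∀ i j, 0 ≤ M i j) (u : ι → ℝ) (v : κ → ℝ) :
    √(∑ i, ∑ j, (M i j - |u i| * |v j|) ^ 2) ≤ √(∑ i, ∑ j, (M i j - u i * v j) ^ 2) := by
  gcongr √(∑ i, ∑ j, ?_) with i _ j _
  rw [← abs_mul]
  exact sq_sub_abs_le_sq_sub_s13 (hM i j) _

/-- The rank-one NMF problem has the same optimal value as the unconstrained
rank-one approximation problem: for a nonnegative matrix `M`, the infimum of the
Frobenius error `‖M - u vᵀ‖_F` over all pairs `(u, v)` equals the infimum over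
all entrywise nonnegative pairs `(u, v)`. -/
theorem rankOne_NMF_infimum_eq {p n : ℕ}
    (M : Matrix (Fin p) (Fin n) ℝ) (hM : ∀ i j, 0 ≤ M i j) :
    sInf {c : ℝ | ∃ (u : Fin p → ℝ) (v : Fin n → ℝ),
        c = Real.sqrt (∑ i, ∑ j, (M i j - u i * v j) ^ 2)}
      = sInf {c : ℝ | ∃ (u : Fin p → ℝ) (v : Fin n → ℝ),
          (∀ i, 0 ≤ u i) ∧ (∀ j, 0 ≤ v j) ∧
          c = Real.sqrt (∑ i, ∑ j, (M i j - u i * v j) ^ 2)} := by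
  apply csInf_eq_csInf_of_forall_exists_le
  · rintro _ ⟨u, v, rfl⟩
    exact ⟨_, ⟨fun i => |u i|, fun j => |v j|, fun i => abs_nonneg _, fun j => abs_nonneg _,
      rfl⟩, sqrt_sum_sq_sub_abs_mul_abs_le M hM u v⟩
  · rintro _ ⟨u, v, -, -, rfl⟩
    exact ⟨_, ⟨u, v, rfl⟩, le_rfl⟩
end

section
/- Let M ∈ ℝ^{p×n} be entrywise nonnegative with every column summing to 1, and suppose M = M(:,K)·V for a subset K of column indices and an entrywise nonnegative matrix V. Then the convex hull of the set of all columns of M equals the convex hull of the set of columns of M indexed by K, i.e., conv{M(:,j) : 1 ≤ j ≤ n} = conv{M(:,j) : j ∈ K}. -/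
/-!
Column `j` of `M(:,K) * V` is the combination `∑ k, V k j • M(:,k)` of the columns indexed by `K`,
with nonnegative weights. Summing the entries of `M = M(:,K) * V` down column `j`, and using that
every column of `M(:,K)` sums to one, shows that these weights sum to one as well. So every
column of `M` lies in the convex hull of the columns indexed by `K`.
-/

open Matrix Set

namespace Matrix

variable {α m k n : Type*} [Fintype k]

theorem transpose_mul_apply_eq_sum_smul [CommSemiring α] (A : Matrix m k α) (V : Matrix k n α)
    (j : n) : (A * V)ᵀ j = ∑ l, V l j • Aᵀ l := by
  ext i
  simp [mul_apply, mul_comm]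

theorem sum_mul_apply [CommSemiring α] [Fintype m] (A : Matrix m k α) (V : Matrix k n α) (j : n) :
    ∑ i, (A * V) i j = ∑ l, (∑ i, A i l) * V l j := by
  simp only [mul_apply, Finset.sum_mul]
  exact Finset.sum_comm

theorem convexHull_range_transpose_mul_subset {𝕜 : Type*} [Field 𝕜] [LinearOrder 𝕜]
    [IsStrictOrderedRing 𝕜] (A : Matrix m k 𝕜) (V : Matrix k n 𝕜) (hV : ∀ l j, 0 ≤ V l j)
    (hV_sum : ∀ j, ∑ l, V l j = 1) :
    convexHull 𝕜 (range (A * V)ᵀ) ⊆ convexHull 𝕜 (range Aᵀ) := by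
  refine convexHull_min ?_ (convex_convexHull 𝕜 _)
  rintro _ ⟨j, rfl⟩
  rw [transpose_mul_apply_eq_sum_smul]
  exact (convex_convexHull 𝕜 _).sum_mem (fun l _ => hV l j) (hV_sum j)
    fun l _ => subset_convexHull 𝕜 _ ⟨l, rfl⟩

end Matrix

theorem separable_convexHull_eq_general {p n : ℕ}
    (M : Matrix (Fin p) (Fin n) ℝ)
    (hcol : ∀ j, ∑ i, M i j = 1)
    (K : Finset (Fin n)) (V : Matrix K (Fin n) ℝ) (hV : ∀ k j, 0 ≤ V k j)
    (hfact : M = M.submatrix id (fun k : K => (k : Fin n)) * V) :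
    convexHull ℝ {x : Fin p → ℝ | ∃ j : Fin n, x = fun i => M i j}
      = convexHull ℝ {x : Fin p → ℝ | ∃ j ∈ K, x = fun i => M i j} := by
  set A := M.submatrix id (fun k : K => (k : Fin n))
  have hV_sum : ∀ j, ∑ k, V k j = 1 := fun j =>
    calc ∑ k, V k j = ∑ k, (∑ i, A i k) * V k j := by simp [A, hcol]
      _ = ∑ i, M i j := by rw [← sum_mul_apply, ← hfact]
      _ = 1 := hcol j
  have hcols : {x : Fin p → ℝ | ∃ j : Fin n, x = fun i => M i j} = range Mᵀ := by
    ext x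
    exact exists_congr fun j => eq_comm
  have hcolsK : {x : Fin p → ℝ | ∃ j ∈ K, x = fun i => M i j} = range Aᵀ := by
    ext x
    exact ⟨fun ⟨j, hj, hx⟩ => ⟨⟨j, hj⟩, hx.symm⟩, fun ⟨k, hx⟩ => ⟨k, k.2, hx.symm⟩⟩
  rw [hcols, hcolsK]
  refine (convexHull_mono ?_).antisymm' ?_
  · rintro _ ⟨k, rfl⟩
    exact ⟨k, rfl⟩
  · conv_lhs => rw [hfact]
    exact convexHull_range_transpose_mul_subset A V hV hV_sum

/-- If `M` is nonnegative with columns summing to one and is separable with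
respect to a set `K` of column indices (`M = M(:,K) · V` with `V` nonnegative),
then the convex hull of the columns of `M` equals the convex hull of the
columns of `M` indexed by `K`. -/
theorem separable_convexHull_eq {p n : ℕ}
    (M : Matrix (Fin p) (Fin n) ℝ) (hM : ∀ i j, 0 ≤ M i j)
    (hcol : ∀ j, ∑ i, M i j = 1)
    (K : Finset (Fin n)) (V : Matrix K (Fin n) ℝ) (hV : ∀ k j, 0 ≤ V k j)
    (hfact : M = M.submatrix id (fun k : K => (k : Fin n)) * V) :
    convexHull ℝ {x : Fin p → ℝ | ∃ j : Fin n, x = fun i => M i j}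
      = convexHull ℝ {x : Fin p → ℝ | ∃ j ∈ K, x = fun i => M i j} :=
  separable_convexHull_eq_general M hcol K V hV hfact
end
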